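/- Let Γ be a connected bipartite graph with exactly three distinct distance eigenvalues δ_0 > δ_1 > δ_2 whose distance matrix satisfies D_Γ j = δ_0 j (constant row sums). If Ω is any connected graph distance cospectral with Γ, then Ω is bipartite and its distance matrix also satisfies D_Ω j = δ_0 j. -/

import Mathlib

open SimpleGraph Matrix Finset

/-- The distance matrix of a graph, with real entries. -/
noncomputable def distMatrix {V : Type*} [Fintype V] (G : SimpleGraph V) : Matrix V V ℝ :=
  Matrix.of fun x y => (G.dist x y : ℝ)

lemma distMatrix_isHermitian {V : Type*} [Fintype V] (G : SimpleGraph V) :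
    (distMatrix G).IsHermitian := by
  ext x y
  simp [distMatrix, Matrix.conjTranspose_apply, SimpleGraph.dist_comm]

/-- The multiset of eigenvalues (with multiplicity) of the distance matrix of `G`. -/
noncomputable def distSpec {V : Type*} [Fintype V] [DecidableEq V] (G : SimpleGraph V) :
    Multiset ℝ :=
  Finset.univ.val.map (distMatrix_isHermitian G).eigenvalues

/-!
Let `δ₀ > δ₁ > δ₂` be the distance eigenvalues of a connected graph. Since its distance matrix `D`
is positive off the diagonal, the Perron argument makes `δ₀` simple, with eigenvector `v`, so
`(D - δ₁)(D - δ₂) = (δ₀ - δ₁)(δ₀ - δ₂) v vᵀ`. Evaluated at an edge `xy` this gives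
`∑ₖ (D x k - D y k)² = (δ₀ - δ₁)(δ₀ - δ₂)(v x - v y)² - 2(δ₁ + δ₂) - 2δ₁δ₂`, where every summand
is `0` or `1`, and is `1` exactly when `k` is not equidistant from `x` and `y`.

For `Γ` the vector `v` is constant and all summands are `1` by bipartiteness, so
`n = -2(δ₁ + δ₂) - 2δ₁δ₂`. Then for `Ω`, which has the same `n` and spectrum, the identity forces
its Perron vector to be constant along edges, hence constant, so `D_Ω j = δ₀ j`; and it forces all
summands to be `1`, so the parity of the distance to a fixed vertex is a proper 2-colouring.
-/

namespace Matrix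

variable {n : Type*} [Fintype n] {M : Matrix n n ℝ}

theorem dotProduct_smul_one_sub_mulVec [DecidableEq n] (μ : ℝ) (x : n → ℝ) :
    x ⬝ᵥ (μ • 1 - M) *ᵥ x = μ * (x ⬝ᵥ x) - x ⬝ᵥ M *ᵥ x := by
  rw [sub_mulVec, smul_mulVec, one_mulVec, dotProduct_sub, dotProduct_smul, smul_eq_mul]

namespace IsHermitian

theorem sum_sq_sub_apply (hM : M.IsHermitian) (x y : n) :
    ∑ k, (M x k - M y k) ^ 2 = (M * M) x x + (M * M) y y - 2 * (M * M) x y := by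
  have hsymm (a b : n) : M b a = M a b := by simpa using hM.apply a b
  simp only [mul_apply, hsymm _ x, hsymm _ y, Finset.mul_sum, ← Finset.sum_add_distrib,
    ← Finset.sum_sub_distrib]
  exact Finset.sum_congr rfl fun k _ => by ring

variable [DecidableEq n]

theorem eigenvectorBasis_ne_zero (hM : M.IsHermitian) (i : n) :
    ⇑(hM.eigenvectorBasis i) ≠ 0 :=
  fun h => hM.eigenvectorBasis.orthonormal.ne_zero i (WithLp.ofLp_injective 2 h)

theorem eigenvectorBasis_dotProduct (hM : M.IsHermitian) (i j : n) :
    ⇑(hM.eigenvectorBasis i) ⬝ᵥ ⇑(hM.eigenvectorBasis j) = if i = j then 1 else 0 := by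
  rw [← orthonormal_iff_ite.mp hM.eigenvectorBasis.orthonormal,
    EuclideanSpace.inner_eq_star_dotProduct, star_trivial, dotProduct_comm]

theorem sub_smul_one_mulVec_eigenvectorBasis (hM : M.IsHermitian) (c : ℝ) (i : n) :
    (M - c • 1) *ᵥ ⇑(hM.eigenvectorBasis i) =
      (hM.eigenvalues i - c) • ⇑(hM.eigenvectorBasis i) := by
  rw [sub_mulVec, smul_mulVec, one_mulVec, hM.mulVec_eigenvectorBasis, sub_smul]

theorem posSemidef_smul_one_sub (hM : M.IsHermitian) {μ : ℝ}
    (h : ∀ i, hM.eigenvalues i ≤ μ) : (μ • 1 - M).PosSemidef := by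
  conv => enter [1, 2]; rw [hM.spectral_theorem]
  set conj := Unitary.conjStarAlgAut ℝ (Matrix n n ℝ) hM.eigenvectorUnitary
  rw [show μ • (1 : Matrix n n ℝ) = conj (μ • 1) by simp, ← map_sub,
    Unitary.conjStarAlgAut_apply, Unitary.isUnit_coe.posSemidef_star_right_conjugate_iff,
    smul_one_eq_diagonal, diagonal_sub, posSemidef_diagonal_iff]
  intro i
  simpa using h i

theorem dotProduct_mulVec_le (hM : M.IsHermitian) {μ : ℝ} (h : ∀ i, hM.eigenvalues i ≤ μ)
    (x : n → ℝ) : x ⬝ᵥ M *ᵥ x ≤ μ * (x ⬝ᵥ x) := by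
  have := (hM.posSemidef_smul_one_sub h).dotProduct_mulVec_nonneg x
  rw [star_trivial, dotProduct_smul_one_sub_mulVec] at this
  linarith

theorem mulVec_eq_smul_of_dotProduct_mulVec_eq (hM : M.IsHermitian) {μ : ℝ}
    (h : ∀ i, hM.eigenvalues i ≤ μ) {x : n → ℝ} (hx : x ⬝ᵥ M *ᵥ x = μ * (x ⬝ᵥ x)) :
    M *ᵥ x = μ • x := by
  have := ((hM.posSemidef_smul_one_sub h).dotProduct_mulVec_zero_iff x).mp
    (by rw [star_trivial, dotProduct_smul_one_sub_mulVec, hx, sub_self])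
  rwa [sub_mulVec, smul_mulVec, one_mulVec, sub_eq_zero, eq_comm] at this

/-- Perron: `|x|` attains the Rayleigh bound `μ` as well, so it is an eigenvector, and a zero
entry of it would force the whole (positive) row to annihilate `|x|`. -/
theorem apply_ne_zero_of_mulVec_eq_smul (hM : M.IsHermitian) (hnn : ∀ a b, 0 ≤ M a b)
    (hpos : ∀ a b, a ≠ b → 0 < M a b) {μ : ℝ} (h : ∀ i, hM.eigenvalues i ≤ μ) {x : n → ℝ}
    (hx : M *ᵥ x = μ • x) (hx0 : x ≠ 0) (a : n) : x a ≠ 0 := by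
  have hyy : |x| ⬝ᵥ |x| = x ⬝ᵥ x := by simp [dotProduct, abs_mul_abs_self]
  have hxy : x ⬝ᵥ M *ᵥ x ≤ |x| ⬝ᵥ M *ᵥ |x| := by
    simp only [dotProduct, mulVec, Finset.mul_sum]
    refine Finset.sum_le_sum fun j _ => Finset.sum_le_sum fun k _ => ?_
    calc x j * (M j k * x k) ≤ |x j * (M j k * x k)| := le_abs_self _
      _ = |x| j * (M j k * |x| k) := by simp [abs_mul, abs_of_nonneg (hnn j k)]
  have hy : M *ᵥ |x| = μ • |x| := by
    refine hM.mulVec_eq_smul_of_dotProduct_mulVec_eq h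
      (le_antisymm (hM.dotProduct_mulVec_le h _) ?_)
    rw [hyy, ← smul_eq_mul, ← dotProduct_smul, ← hx]
    exact hxy
  intro hxa
  have hrow : ∑ k, M a k * |x| k = 0 := by
    simpa [mulVec, dotProduct, hxa] using congrFun hy a
  have hzero := (Finset.sum_eq_zero_iff_of_nonneg fun k _ =>
    mul_nonneg (hnn a k) (abs_nonneg (x k))).mp hrow
  refine hx0 (funext fun k => ?_)
  obtain rfl | hk := eq_or_ne k a
  · exact hxa
  · simpa [(hpos a k (Ne.symm hk)).ne'] using hzero k (Finset.mem_univ k)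

theorem exists_eq_smul_of_mulVec_eq_smul (hM : M.IsHermitian) (hnn : ∀ a b, 0 ≤ M a b)
    (hpos : ∀ a b, a ≠ b → 0 < M a b) {μ : ℝ} (h : ∀ i, hM.eigenvalues i ≤ μ) {x y : n → ℝ}
    (hx : M *ᵥ x = μ • x) (hy : M *ᵥ y = μ • y) (hy0 : y ≠ 0) : ∃ c : ℝ, x = c • y := by
  obtain ⟨a, ha⟩ := Function.ne_iff.mp hy0
  refine ⟨x a / y a, sub_eq_zero.mp ?_⟩
  by_contra hne
  refine hM.apply_ne_zero_of_mulVec_eq_smul hnn hpos h ?_ hne a ?_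
  · rw [mulVec_sub, mulVec_smul, hx, hy, smul_sub, smul_comm]
  · simp [div_mul_cancel₀ _ ha]

theorem eq_of_eigenvalues_eq (hM : M.IsHermitian) (hnn : ∀ a b, 0 ≤ M a b)
    (hpos : ∀ a b, a ≠ b → 0 < M a b) {μ : ℝ} (h : ∀ i, hM.eigenvalues i ≤ μ) {i j : n}
    (hi : hM.eigenvalues i = μ) (hj : hM.eigenvalues j = μ) : i = j := by
  by_contra hij
  obtain ⟨c, hc⟩ := hM.exists_eq_smul_of_mulVec_eq_smul hnn hpos h
    (by rw [hM.mulVec_eigenvectorBasis, hi]) (by rw [hM.mulVec_eigenvectorBasis, hj])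
    (hM.eigenvectorBasis_ne_zero j)
  have hc₀ := hM.eigenvectorBasis_dotProduct j i
  rw [hc, dotProduct_smul, hM.eigenvectorBasis_dotProduct, if_pos rfl, if_neg (Ne.symm hij),
    smul_eq_mul, mul_one] at hc₀
  exact hM.eigenvectorBasis_ne_zero i (by rw [hc, hc₀, zero_smul])

theorem sub_smul_one_mul_sub_smul_one_eq_smul_vecMulVec (hM : M.IsHermitian) {δ₀ δ₁ δ₂ : ℝ}
    {i₀ : n} (h₀ : hM.eigenvalues i₀ = δ₀)
    (h : ∀ i, i ≠ i₀ → hM.eigenvalues i = δ₁ ∨ hM.eigenvalues i = δ₂) :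
    (M - δ₁ • 1) * (M - δ₂ • 1) = ((δ₀ - δ₁) * (δ₀ - δ₂)) •
      vecMulVec ⇑(hM.eigenvectorBasis i₀) ⇑(hM.eigenvectorBasis i₀) := by
  apply Matrix.toEuclideanLin.injective <| hM.eigenvectorBasis.toBasis.ext fun i ↦ ?_
  simp only [OrthonormalBasis.coe_toBasis, toLpLin_apply]
  congr 1
  rw [← mulVec_mulVec, sub_smul_one_mulVec_eigenvectorBasis, mulVec_smul,
    sub_smul_one_mulVec_eigenvectorBasis, smul_smul, smul_mulVec, vecMulVec_mulVec,
    op_smul_eq_smul, eigenvectorBasis_dotProduct]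
  obtain rfl | hi := eq_or_ne i i₀
  · simp [h₀, mul_comm]
  · rcases h i hi with h' | h' <;> simp [h', hi.symm]

theorem sum_sq_sub_apply_eq_of_sub_mul_sub (hM : M.IsHermitian) {δ₁ δ₂ γ : ℝ} {v : n → ℝ}
    (hP : (M - δ₁ • 1) * (M - δ₂ • 1) = γ • vecMulVec v v) (hdiag : ∀ a, M a a = 0)
    {x y : n} (hxy : x ≠ y) (hMxy : M x y = 1) :
    ∑ k, (M x k - M y k) ^ 2 = γ * (v x - v y) ^ 2 - 2 * (δ₁ + δ₂) - 2 * (δ₁ * δ₂) := by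
  have hsq : M * M = γ • vecMulVec v v + (δ₁ + δ₂) • M - (δ₁ * δ₂) • 1 := by
    rw [← hP]
    simp only [sub_mul, mul_sub, Matrix.smul_mul, Matrix.mul_smul, Matrix.one_mul,
      Matrix.mul_one, smul_smul]
    module
  rw [hM.sum_sq_sub_apply, hsq]
  simp only [sub_apply, add_apply, smul_apply, vecMulVec_apply, smul_eq_mul, hdiag, hMxy,
    one_apply_eq, one_apply_ne hxy]
  ring

end IsHermitian

end Matrix

namespace SimpleGraph

variable {V : Type*} {G : SimpleGraph V}

theorem Preconnected.eq_of_forall_adj {α : Type*} {f : V → α} (hG : G.Preconnected)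
    (hf : ∀ ⦃x y⦄, G.Adj x y → f x = f y) (a b : V) : f a = f b := by
  obtain ⟨p⟩ := hG a b
  induction p with
  | nil => rfl
  | cons h _ ih => exact (hf h).trans ih

theorem Connected.colorable_two_iff (hG : G.Connected) :
    G.Colorable 2 ↔ ∀ ⦃x y⦄, G.Adj x y → ∀ k, G.dist x k ≠ G.dist y k := by
  constructor
  · intro hcol x y hxy k hdist
    obtain ⟨p, hp⟩ := hG.exists_walk_length_eq_dist x k
    obtain ⟨q, hq⟩ := hG.exists_walk_length_eq_dist y k
    have := two_colorable_iff_forall_loop_even.mp hcol x (.cons hxy (q.append p.reverse))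
    rw [Walk.length_cons, Walk.length_append, Walk.length_reverse, hp, hq, hdist] at this
    exact Nat.not_even_iff_odd.mpr (by simp) this
  · intro h
    obtain ⟨w⟩ := hG.nonempty
    have hcol : G.Coloring (ZMod 2) := .mk (fun a => (G.dist a w : ZMod 2)) fun {a b} hab => by
      have hne := h hab w
      have hstep : G.dist a w = G.dist b w + 1 ∨ G.dist b w = G.dist a w + 1 := by
        have := hab.diff_dist_adj (u := w)
        rw [dist_comm, dist_comm (u := w)] at this
        omega
      have hz : ∀ z : ZMod 2, z + 1 ≠ z := by decide
      rcases hstep with hd | hd <;> rw [hd] <;> push_cast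
      exacts [hz _, (hz _).symm]
    simpa using hcol.colorable

end SimpleGraph

section DistanceMatrix

variable {V : Type*} [Fintype V] {G : SimpleGraph V}

@[simp]
theorem distMatrix_apply (G : SimpleGraph V) (x y : V) : distMatrix G x y = G.dist x y := rfl

theorem sq_sub_distMatrix_of_adj {x y : V} (hxy : G.Adj x y) (k : V) :
    (distMatrix G x k - distMatrix G y k) ^ 2 = if G.dist x k = G.dist y k then 0 else 1 := by
  have hstep : G.dist x k = G.dist y k ∨ G.dist x k = G.dist y k + 1 ∨
      G.dist y k = G.dist x k + 1 := by
    have := hxy.diff_dist_adj (u := k)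
    rw [dist_comm, dist_comm (u := k)] at this
    omega
  rcases hstep with h | h | h <;> simp [h]

theorem sum_sq_sub_distMatrix_le {x y : V} (hxy : G.Adj x y) :
    ∑ k, (distMatrix G x k - distMatrix G y k) ^ 2 ≤ Fintype.card V := by
  rw [← Finset.card_univ, ← nsmul_one, ← Finset.sum_const]
  gcongr with k
  rw [sq_sub_distMatrix_of_adj hxy]
  split_ifs <;> norm_num

theorem sum_sq_sub_distMatrix_eq_card_iff {x y : V} (hxy : G.Adj x y) :
    ∑ k, (distMatrix G x k - distMatrix G y k) ^ 2 = Fintype.card V ↔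
      ∀ k, G.dist x k ≠ G.dist y k := by
  rw [← Finset.card_univ, ← nsmul_one, ← Finset.sum_const, Finset.sum_eq_sum_iff_of_le]
  · simp only [Finset.mem_univ, forall_const, sq_sub_distMatrix_of_adj hxy]
    refine forall_congr' fun k => ?_
    split_ifs <;> simp_all
  · intro k _
    rw [sq_sub_distMatrix_of_adj hxy]
    split_ifs <;> norm_num

variable [DecidableEq V]

theorem mem_distSpec {μ : ℝ} :
    μ ∈ distSpec G ↔ ∃ i, (distMatrix_isHermitian G).eigenvalues i = μ := by
  simp [distSpec]

theorem card_distSpec (G : SimpleGraph V) : Multiset.card (distSpec G) = Fintype.card V := by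
  simp [distSpec]

theorem card_toFinset_distSpec_le (G : SimpleGraph V) :
    (distSpec G).toFinset.card ≤ Fintype.card V :=
  card_distSpec G ▸ Multiset.toFinset_card_le _

theorem SimpleGraph.Connected.exists_sum_sq_sub_distMatrix_eq (hG : G.Connected)
    {δ₀ δ₁ δ₂ : ℝ} (h₂₁ : δ₂ < δ₁) (h₁₀ : δ₁ < δ₀)
    (hspec : (distSpec G).toFinset = {δ₀, δ₁, δ₂}) :
    ∃ v : V → ℝ, v ≠ 0 ∧ distMatrix G *ᵥ v = δ₀ • v ∧
      (∀ w, distMatrix G *ᵥ w = δ₀ • w → w ≠ 0 → ∃ c : ℝ, v = c • w) ∧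
      ∀ ⦃x y⦄, G.Adj x y → ∑ k, (distMatrix G x k - distMatrix G y k) ^ 2 =
        (δ₀ - δ₁) * (δ₀ - δ₂) * (v x - v y) ^ 2 - 2 * (δ₁ + δ₂) - 2 * (δ₁ * δ₂) := by
  set hD := distMatrix_isHermitian G
  have hmem (i : V) :
      hD.eigenvalues i = δ₀ ∨ hD.eigenvalues i = δ₁ ∨ hD.eigenvalues i = δ₂ := by
    have := Multiset.mem_toFinset.mpr ((mem_distSpec (G := G)).mpr ⟨i, rfl⟩)
    simpa [hspec] using this
  have hle (i : V) : hD.eigenvalues i ≤ δ₀ := by rcases hmem i with h | h | h <;> linarith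
  have hnn (a b : V) : 0 ≤ distMatrix G a b := Nat.cast_nonneg _
  have hpos (a b : V) (hab : a ≠ b) : 0 < distMatrix G a b :=
    Nat.cast_pos.mpr (hG.pos_dist_of_ne hab)
  obtain ⟨i₀, hi₀⟩ :=
    mem_distSpec.mp <| Multiset.mem_toFinset.mp <| hspec ▸ mem_insert_self _ _
  have hother (i : V) (hi : i ≠ i₀) : hD.eigenvalues i = δ₁ ∨ hD.eigenvalues i = δ₂ :=
    (hmem i).resolve_left fun h => hi (hD.eq_of_eigenvalues_eq hnn hpos hle h hi₀)
  have hv : distMatrix G *ᵥ ⇑(hD.eigenvectorBasis i₀) = δ₀ • ⇑(hD.eigenvectorBasis i₀) := by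
    rw [hD.mulVec_eigenvectorBasis, hi₀]
  refine ⟨_, hD.eigenvectorBasis_ne_zero i₀, hv,
    fun w hw hw₀ => hD.exists_eq_smul_of_mulVec_eq_smul hnn hpos hle hv hw hw₀,
    fun x y hxy => ?_⟩
  exact hD.sum_sq_sub_apply_eq_of_sub_mul_sub
    (hD.sub_smul_one_mul_sub_smul_one_eq_smul_vecMulVec hi₀ hother) (by simp) hxy.ne
    (by simpa using hxy)

theorem SimpleGraph.Connected.card_eq_of_colorable_two (hG : G.Connected)
    (hbip : G.Colorable 2) {δ₀ δ₁ δ₂ : ℝ} (h₂₁ : δ₂ < δ₁) (h₁₀ : δ₁ < δ₀)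
    (hspec : (distSpec G).toFinset = {δ₀, δ₁, δ₂})
    (hrow : distMatrix G *ᵥ (fun _ => (1 : ℝ)) = δ₀ • fun _ => (1 : ℝ)) :
    (Fintype.card V : ℝ) = -2 * (δ₁ + δ₂) - 2 * (δ₁ * δ₂) := by
  obtain ⟨v, -, -, hv_span, hsum⟩ := hG.exists_sum_sq_sub_distMatrix_eq h₂₁ h₁₀ hspec
  have : Nontrivial V := Fintype.one_lt_card_iff_nontrivial.mp <| by
    have := card_toFinset_distSpec_le G
    rw [hspec, Finset.card_eq_three.mpr
      ⟨δ₀, δ₁, δ₂, h₁₀.ne', (h₂₁.trans h₁₀).ne', h₂₁.ne', rfl⟩] at this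
    omega
  obtain ⟨x, y, hxy⟩ : ∃ x y, G.Adj x y :=
    ⟨_, hG.preconnected.exists_adj_of_nontrivial hG.nonempty.some⟩
  obtain ⟨c, rfl⟩ := hv_span _ hrow (Function.ne_iff.mpr ⟨x, one_ne_zero⟩)
  have := hsum hxy
  rw [(sum_sq_sub_distMatrix_eq_card_iff hxy).mpr (hG.colorable_two_iff.mp hbip hxy)] at this
  simpa using this

theorem SimpleGraph.Connected.colorable_two_and_distMatrix_mulVec_one_of_card_eq
    (hG : G.Connected) {δ₀ δ₁ δ₂ : ℝ} (h₂₁ : δ₂ < δ₁) (h₁₀ : δ₁ < δ₀)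
    (hspec : (distSpec G).toFinset = {δ₀, δ₁, δ₂})
    (hcard : (Fintype.card V : ℝ) = -2 * (δ₁ + δ₂) - 2 * (δ₁ * δ₂)) :
    G.Colorable 2 ∧ distMatrix G *ᵥ (fun _ => (1 : ℝ)) = δ₀ • fun _ => (1 : ℝ) := by
  obtain ⟨u, hu₀, hu, -, hsum⟩ := hG.exists_sum_sq_sub_distMatrix_eq h₂₁ h₁₀ hspec
  have hγ : 0 < (δ₀ - δ₁) * (δ₀ - δ₂) := mul_pos (by linarith) (by linarith)
  have hedge ⦃a b : V⦄ (hab : G.Adj a b) :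
      u a = u b ∧ ∑ k, (distMatrix G a k - distMatrix G b k) ^ 2 = Fintype.card V := by
    have hle := sum_sq_sub_distMatrix_le hab
    rw [hsum hab, hcard] at hle ⊢
    have : (u a - u b) ^ 2 = 0 := by nlinarith [sq_nonneg (u a - u b)]
    constructor
    · linarith [pow_eq_zero_iff (n := 2) two_ne_zero |>.mp this]
    · rw [this]; ring
  refine ⟨hG.colorable_two_iff.mpr fun a b hab =>
    (sum_sq_sub_distMatrix_eq_card_iff hab).mp (hedge hab).2, ?_⟩
  obtain ⟨w⟩ := hG.nonempty
  have hu_const : u = u w • fun _ => (1 : ℝ) := funext fun a => by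
    simpa using hG.preconnected.eq_of_forall_adj (fun a b hab => (hedge hab).1) a w
  have hu_w : u w ≠ 0 := fun h => hu₀ (by rw [hu_const, h, zero_smul])
  rw [hu_const, mulVec_smul, smul_comm] at hu
  exact smul_right_injective _ hu_w hu

end DistanceMatrix

theorem dcube_stmt15 {V W : Type*} [Fintype V] [DecidableEq V] [Fintype W] [DecidableEq W]
    (Γ : SimpleGraph V) (hΓconn : Γ.Connected) (hΓbip : Γ.Colorable 2)
    (δ0 δ1 δ2 : ℝ) (h21 : δ2 < δ1) (h10 : δ1 < δ0)
    (hspec : (distSpec Γ).toFinset = {δ0, δ1, δ2})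
    (hrow : distMatrix Γ *ᵥ (fun _ => (1 : ℝ)) = δ0 • fun _ => (1 : ℝ))
    (Ω : SimpleGraph W) (hΩconn : Ω.Connected)
    (hcospec : distSpec Ω = distSpec Γ) :
    Ω.Colorable 2 ∧ distMatrix Ω *ᵥ (fun _ => (1 : ℝ)) = δ0 • fun _ => (1 : ℝ) := by
  have hcard : Fintype.card W = Fintype.card V := by
    rw [← card_distSpec, hcospec, card_distSpec]
  refine hΩconn.colorable_two_and_distMatrix_mulVec_one_of_card_eq h21 h10
    (hcospec ▸ hspec) ?_
  rw [hcard]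
  exact hΓconn.card_eq_of_colorable_two hΓbip h21 h10 hspec hrow
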